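/- Let R be the free noncommutative F-algebra on two generators X₁, X₂ over F = ℚ(A), let J and B = R/J be as above, and let τ₁, τ₂ be the F-algebra automorphisms of B induced by T₁ and T₂. Then τ₁ and τ₂ satisfy τ₁τ₂τ₁ = τ₂τ₁τ₂ and (τ₁τ₂τ₁)² = id_B. Consequently, there is a group homomorphism from the presented group ⟨t₁, t₂ | t₁t₂t₁ = t₂t₁t₂, (t₁t₂t₁)² = 1⟩ (which is PSL₂(ℤ), the mapping class group of the one-holed torus modulo its center) to the group of F-algebra automorphisms of B sending t₁ to τ₁ and t₂ to τ₂. -/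

import Mathlib

/-- `F = ℚ(A)`, the field of rational functions in one variable over `ℚ`. -/
noncomputable abbrev F : Type := RatFunc ℚ

/-- The variable `A ∈ ℚ(A)`. -/
noncomputable def A : F := RatFunc.X

/-- The deformed bracket `[x,y]_A = A·(x*y) − A⁻¹·(y*x)` in an `F`-algebra. -/
noncomputable def brA {S : Type*} [Ring S] [Algebra F S] (x y : S) : S :=
  A • (x * y) - A⁻¹ • (y * x)

/-- `R`, the free noncommutative `F`-algebra on two generators. -/
noncomputable abbrev R : Type := FreeAlgebra F (Fin 2)

/-- The first generator `X₁`. -/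
noncomputable def X1 : R := FreeAlgebra.ι F 0

/-- The second generator `X₂`. -/
noncomputable def X2 : R := FreeAlgebra.ι F 1

/-- The generators as a function on `Fin 2`. -/
noncomputable def X : Fin 2 → R := ![X1, X2]

/-- `T₁ : X₁ ↦ X₁, X₂ ↦ [X₁,X₂]_A`. -/
noncomputable def T1 : R →ₐ[F] R := FreeAlgebra.lift F ![X1, brA X1 X2]

/-- `T₁⁻ : X₁ ↦ X₁, X₂ ↦ [X₂,X₁]_A`. -/
noncomputable def T1inv : R →ₐ[F] R := FreeAlgebra.lift F ![X1, brA X2 X1]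

/-- `T₂ : X₁ ↦ [X₂,X₁]_A, X₂ ↦ X₂`. -/
noncomputable def T2 : R →ₐ[F] R := FreeAlgebra.lift F ![brA X2 X1, X2]

/-- `T₂⁻ : X₁ ↦ [X₁,X₂]_A, X₂ ↦ X₂`. -/
noncomputable def T2inv : R →ₐ[F] R := FreeAlgebra.lift F ![brA X1 X2, X2]

/-- The two-sided ideal `J` generated by `[[X₁,X₂]_A, X₁]_A − X₂` and
`[[X₂,X₁]_A, X₂]_A − X₁`. -/
noncomputable def J : TwoSidedIdeal R :=
  TwoSidedIdeal.span {brA (brA X1 X2) X1 - X2, brA (brA X2 X1) X2 - X1}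

/-- The quotient algebra `B = R/J`. -/
noncomputable abbrev B : Type := RingQuot (fun x y : R => x - y ∈ J)

/-- The quotient map `π : R → B` as an `F`-algebra homomorphism. -/
noncomputable def pi : R →ₐ[F] B := RingQuot.mkAlgHom F (fun x y : R => x - y ∈ J)

/-- The relations of the presentation
`⟨t₁, t₂ | t₁t₂t₁ = t₂t₁t₂, (t₁t₂t₁)² = 1⟩` of `PSL₂(ℤ)`, the mapping class group of the
one-holed torus modulo its center. -/
noncomputable def rels : Set (FreeGroup (Fin 2)) :=
  {FreeGroup.of 0 * FreeGroup.of 1 * FreeGroup.of 0 *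
      (FreeGroup.of 1 * FreeGroup.of 0 * FreeGroup.of 1)⁻¹,
   (FreeGroup.of 0 * FreeGroup.of 1 * FreeGroup.of 0) ^ 2}

/-!
An `F`-algebra map out of `B = R/J` is the same as a pair `(x, y)` satisfying the two defining
relations of `J`. In every `F`-algebra the bracket satisfies the flexible law
`[x,[y,x]_A]_A = [[x,y]_A,x]_A`; with it, `(x, y) ↦ (x, [x,y]_A)` and `(x, y) ↦ (x, [y,x]_A)`
preserve the relations and are mutually inverse on such pairs, which yields `τ₁`, and `τ₂` by the
symmetry `X₁ ↔ X₂`. Both `τ₁τ₂τ₁` and `τ₂τ₁τ₂` swap `π X₁` and `π X₂`, giving the braid relation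
and `(τ₁τ₂τ₁)² = 1`.
-/

section Bracket

variable {S : Type*} [Ring S] [Algebra F S]

theorem brA_flexible (x y : S) : brA x (brA y x) = brA (brA x y) x := by
  simp only [brA, mul_sub, sub_mul, smul_sub, mul_smul_comm, smul_mul_assoc, smul_smul, mul_assoc]
  rw [mul_comm A A⁻¹]
  abel

theorem map_brA {S' G : Type*} [Ring S'] [Algebra F S'] [FunLike G S S'] [AlgHomClass G F S S']
    (f : G) (x y : S) : f (brA x y) = brA (f x) (f y) := by
  simp only [brA, map_sub, map_mul, map_smul]

def SatisfiesJ (x y : S) : Prop :=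
  brA (brA x y) x = y ∧ brA (brA y x) y = x

namespace SatisfiesJ

variable {x y : S}

theorem symm (h : SatisfiesJ x y) : SatisfiesJ y x := ⟨h.2, h.1⟩

theorem brA_fst_snd (h : SatisfiesJ x y) : SatisfiesJ x (brA x y) := by
  constructor
  · rw [← brA_flexible, h.1]
  · rw [h.1, brA_flexible, h.2]

theorem brA_snd_fst (h : SatisfiesJ x y) : SatisfiesJ x (brA y x) := by
  constructor
  · rw [brA_flexible, h.1]
  · rw [← brA_flexible, brA_flexible x y, h.1, h.2]

end SatisfiesJ

end Bracket

section Quotient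

variable {S : Type*} [Ring S] [Algebra F S]

theorem J_le_ker_lift {x y : S} (h : SatisfiesJ x y) :
    J ≤ TwoSidedIdeal.ker (FreeAlgebra.lift F ![x, y]) := by
  refine TwoSidedIdeal.span_le.mpr ?_
  rintro r (rfl | rfl) <;>
    simp [TwoSidedIdeal.mem_ker, map_brA, X1, X2, h.1, h.2]

noncomputable def liftB (x y : S) (h : SatisfiesJ x y) : B →ₐ[F] S :=
  RingQuot.liftAlgHom F ⟨FreeAlgebra.lift F ![x, y], fun a b hab => by
    rw [← sub_eq_zero, ← map_sub]
    exact (TwoSidedIdeal.mem_ker _).mp (J_le_ker_lift h hab)⟩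

theorem liftB_pi {x y : S} (h : SatisfiesJ x y) (r : R) :
    liftB x y h (pi r) = FreeAlgebra.lift F ![x, y] r :=
  RingQuot.liftAlgHom_mkAlgHom_apply _ _ _ _

@[simp]
theorem liftB_pi_X1 {x y : S} (h : SatisfiesJ x y) : liftB x y h (pi X1) = x := by
  simp [liftB_pi, X1]

@[simp]
theorem liftB_pi_X2 {x y : S} (h : SatisfiesJ x y) : liftB x y h (pi X2) = y := by
  simp [liftB_pi, X2]

theorem B.algHom_ext {f g : B →ₐ[F] S} (h1 : f (pi X1) = g (pi X1))
    (h2 : f (pi X2) = g (pi X2)) : f = g := by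
  refine RingQuot.ringQuot_ext' _ _ _ (FreeAlgebra.hom_ext (funext fun i => ?_))
  fin_cases i
  exacts [h1, h2]

theorem B.algEquiv_ext {f g : B ≃ₐ[F] B} (h1 : f (pi X1) = g (pi X1))
    (h2 : f (pi X2) = g (pi X2)) : f = g :=
  AlgEquiv.coe_toAlgHom_injective (B.algHom_ext h1 h2)

theorem R.algHom_ext {f g : R →ₐ[F] S} (h1 : f X1 = g X1) (h2 : f X2 = g X2) : f = g := by
  refine FreeAlgebra.hom_ext (funext fun i => ?_)
  fin_cases i
  exacts [h1, h2]

end Quotient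

theorem satisfiesJ_pi : SatisfiesJ (pi X1) (pi X2) := by
  constructor <;>
  · rw [← map_brA, ← map_brA]
    exact RingQuot.mkAlgHom_rel F (TwoSidedIdeal.subset_span (by simp))

noncomputable def tau1 : B ≃ₐ[F] B :=
  AlgEquiv.ofAlgHom (liftB _ _ satisfiesJ_pi.brA_fst_snd)
    (liftB _ _ satisfiesJ_pi.brA_snd_fst)
    (B.algHom_ext (by simp) (by simp [map_brA, satisfiesJ_pi.1]))
    (B.algHom_ext (by simp) (by simp [map_brA, brA_flexible, satisfiesJ_pi.1]))

noncomputable def tau2 : B ≃ₐ[F] B :=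
  AlgEquiv.ofAlgHom (liftB _ _ satisfiesJ_pi.symm.brA_fst_snd.symm)
    (liftB _ _ satisfiesJ_pi.symm.brA_snd_fst.symm)
    (B.algHom_ext (by simp [map_brA, satisfiesJ_pi.2]) (by simp))
    (B.algHom_ext (by simp [map_brA, brA_flexible, satisfiesJ_pi.2]) (by simp))

theorem tau1_pi_X1 : tau1 (pi X1) = pi X1 := liftB_pi_X1 _
theorem tau1_pi_X2 : tau1 (pi X2) = brA (pi X1) (pi X2) := liftB_pi_X2 _
theorem tau2_pi_X1 : tau2 (pi X1) = brA (pi X2) (pi X1) := liftB_pi_X1 _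
theorem tau2_pi_X2 : tau2 (pi X2) = pi X2 := liftB_pi_X2 _

theorem T1_X1 : T1 X1 = X1 := by simp [T1, X1]
theorem T1_X2 : T1 X2 = brA X1 X2 := by simp [T1, X2]
theorem T2_X1 : T2 X1 = brA X2 X1 := by simp [T2, X1]
theorem T2_X2 : T2 X2 = X2 := by simp [T2, X2]

theorem tau1_pi (r : R) : tau1 (pi r) = pi (T1 r) := by
  change ((tau1 : B →ₐ[F] B).comp pi) r = (pi.comp T1) r
  congr 1
  exact R.algHom_ext (by simp [T1_X1, tau1_pi_X1]) (by simp [T1_X2, tau1_pi_X2, map_brA])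

theorem tau2_pi (r : R) : tau2 (pi r) = pi (T2 r) := by
  change ((tau2 : B →ₐ[F] B).comp pi) r = (pi.comp T2) r
  congr 1
  exact R.algHom_ext (by simp [T2_X1, tau2_pi_X1, map_brA]) (by simp [T2_X2, tau2_pi_X2])

theorem tau1_tau2_tau1_pi_X1 : (tau1 * tau2 * tau1) (pi X1) = pi X2 := by
  rw [AlgEquiv.mul_apply, AlgEquiv.mul_apply, tau1_pi_X1, tau2_pi_X1, map_brA, tau1_pi_X1,
    tau1_pi_X2, satisfiesJ_pi.1]

theorem tau1_tau2_tau1_pi_X2 : (tau1 * tau2 * tau1) (pi X2) = pi X1 := by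
  rw [AlgEquiv.mul_apply, AlgEquiv.mul_apply, tau1_pi_X2, map_brA, tau2_pi_X1, tau2_pi_X2,
    satisfiesJ_pi.2, tau1_pi_X1]

theorem tau1_tau2_tau1_eq : tau1 * tau2 * tau1 = tau2 * tau1 * tau2 := by
  refine B.algEquiv_ext ?_ ?_
  · rw [tau1_tau2_tau1_pi_X1, AlgEquiv.mul_apply, AlgEquiv.mul_apply, tau2_pi_X1, map_brA,
      tau1_pi_X1, tau1_pi_X2, satisfiesJ_pi.1, tau2_pi_X2]
  · rw [tau1_tau2_tau1_pi_X2, AlgEquiv.mul_apply, AlgEquiv.mul_apply, tau2_pi_X2, tau1_pi_X2,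
      map_brA, tau2_pi_X1, tau2_pi_X2, satisfiesJ_pi.2]

theorem tau1_tau2_tau1_sq : (tau1 * tau2 * tau1) ^ 2 = 1 := by
  refine B.algEquiv_ext ?_ ?_ <;> rw [pow_two, AlgEquiv.mul_apply, AlgEquiv.one_apply]
  · rw [tau1_tau2_tau1_pi_X1, tau1_tau2_tau1_pi_X2]
  · rw [tau1_tau2_tau1_pi_X2, tau1_tau2_tau1_pi_X1]

noncomputable def mcgAction : PresentedGroup rels →* (B ≃ₐ[F] B) :=
  PresentedGroup.toGroup (f := ![tau1, tau2]) <| by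
    rintro r (rfl | rfl)
    · simp [tau1_tau2_tau1_eq]
    · simpa using tau1_tau2_tau1_sq

/-- `T₁, T₂` induce `F`-algebra automorphisms `τ₁, τ₂` of `B = R/J` satisfying
`τ₁τ₂τ₁ = τ₂τ₁τ₂` and `(τ₁τ₂τ₁)² = id`; consequently there is a group homomorphism from the
presented group `⟨t₁, t₂ | t₁t₂t₁ = t₂t₁t₂, (t₁t₂t₁)² = 1⟩` to the group of `F`-algebra
automorphisms of `B` sending `t₁ ↦ τ₁` and `t₂ ↦ τ₂`. -/
theorem mapping_class_group_action_on_quotient :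
    ∃ τ1 τ2 : B ≃ₐ[F] B,
      (∀ x : R, τ1 (pi x) = pi (T1 x)) ∧ (∀ x : R, τ2 (pi x) = pi (T2 x)) ∧
      τ1 * τ2 * τ1 = τ2 * τ1 * τ2 ∧ (τ1 * τ2 * τ1) ^ 2 = 1 ∧
      ∃ φ : PresentedGroup rels →* (B ≃ₐ[F] B),
        φ (PresentedGroup.of 0) = τ1 ∧ φ (PresentedGroup.of 1) = τ2 :=
  ⟨tau1, tau2, tau1_pi, tau2_pi, tau1_tau2_tau1_eq, tau1_tau2_tau1_sq, mcgAction,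
    PresentedGroup.toGroup.of _, PresentedGroup.toGroup.of _⟩
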